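/- Let A and B be two-outcome observables on a complex Hilbert space H (i.e., A(0), A(1), B(0), B(1) are effects with A(0)+A(1) = I and B(0)+B(1) = I). Suppose A and B have exactly one joint observable G. Then G is a maximal joint observable: for each i, j ∈ {0,1}, the effect G(i,j) is a maximal element of lb(A(i), B(j)). -/

import Mathlib

/-!
If `G` is a joint observable and `G i j ≤ D` for some `D ∈ lb(A i, B j)`, add `E = D - G i j` on
the cells `(i, j)`, `(i + 1, j + 1)` and subtract it on the other two. The margins do not change,
and the four cells become `D`, `A i - D`, `B j - D` and `G (i + 1) (j + 1) + E`, all positive.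
This is again a joint observable of `A` and `B`, so by uniqueness it is `G`, whence `D = G i j`.
-/

noncomputable section

variable {H : Type*} [NormedAddCommGroup H] [InnerProductSpace ℂ H] [CompleteSpace H]

/-- An operator is an effect if `0 ≤ E ≤ I` in the Loewner order. -/
def IsEffect (E : H →L[ℂ] H) : Prop := E.IsPositive ∧ ((1 : H →L[ℂ] H) - E).IsPositive

/-- The Loewner order: `A ≤ B` iff `B - A` is positive. -/
def loewnerLE (A B : H →L[ℂ] H) : Prop := (B - A).IsPositive

/-- `G` is a joint observable of the two-outcome observables `A` and `B`. -/
def IsJointObs (G : Fin 2 → Fin 2 → (H →L[ℂ] H)) (A B : Fin 2 → (H →L[ℂ] H)) : Prop :=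
  (∀ i j, (G i j).IsPositive) ∧ (∑ i, ∑ j, G i j) = 1 ∧
    (∀ i, (∑ j, G i j) = A i) ∧ (∀ j, (∑ i, G i j) = B j)

/-- `C` is a maximal element of `lb(A,B)`. -/
def IsMaximalLB (C A B : H →L[ℂ] H) : Prop :=
  (IsEffect C ∧ loewnerLE C A ∧ loewnerLE C B) ∧
    ¬ ∃ D : H →L[ℂ] H, (IsEffect D ∧ loewnerLE D A ∧ loewnerLE D B) ∧ loewnerLE C D ∧ C ≠ D

lemma Fin.sum_univ_two_of_ne {M : Type*} [AddCommMonoid M] {f : Fin 2 → M} {j l : Fin 2}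
    (h : l ≠ j) : ∑ k, f k = f j + f l := by
  fin_cases j <;> fin_cases l <;> simp_all [Fin.sum_univ_two, add_comm]

section Checkerboard

variable {M : Type*} [AddCommGroup M]

def checkerboard (i j : Fin 2) (E : M) (k l : Fin 2) : M :=
  if (k = i ↔ l = j) then E else -E

lemma sum_checkerboard_right (i j : Fin 2) (E : M) (k : Fin 2) :
    ∑ l, checkerboard i j E k l = 0 := by
  fin_cases i <;> fin_cases j <;> fin_cases k <;> simp [checkerboard, Fin.sum_univ_two]

lemma sum_checkerboard_left (i j : Fin 2) (E : M) (l : Fin 2) :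
    ∑ k, checkerboard i j E k l = 0 := by
  fin_cases i <;> fin_cases j <;> fin_cases l <;> simp [checkerboard, Fin.sum_univ_two]

lemma nonneg_add_checkerboard [PartialOrder M] [IsOrderedAddMonoid M]
    {G : Fin 2 → Fin 2 → M} (hG : ∀ k l, 0 ≤ G k l) {i j : Fin 2} {D : M}
    (hGD : G i j ≤ D) (hDrow : D ≤ ∑ l, G i l) (hDcol : D ≤ ∑ k, G k j) (k l : Fin 2) :
    0 ≤ G k l + checkerboard i j (D - G i j) k l := by
  by_cases hk : k = i <;> by_cases hl : l = j
  · subst hk hl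
    simpa [checkerboard] using (hG k l).trans hGD
  · subst hk
    rw [Fin.sum_univ_two_of_ne hl] at hDrow
    calc 0 ≤ G k j + G k l - D := sub_nonneg.2 hDrow
      _ = _ := by simp [checkerboard, hl]; abel
  · subst hl
    rw [Fin.sum_univ_two_of_ne hk] at hDcol
    calc 0 ≤ G i l + G k l - D := sub_nonneg.2 hDcol
      _ = _ := by simp [checkerboard, hk]; abel
  · simpa [checkerboard, hk, hl] using add_nonneg (hG k l) (sub_nonneg.2 hGD)

end Checkerboard

lemma isEffect_iff {E : H →L[ℂ] H} : IsEffect E ↔ 0 ≤ E ∧ E ≤ 1 := by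
  rw [IsEffect, ContinuousLinearMap.nonneg_iff_isPositive, ContinuousLinearMap.le_def]

lemma loewnerLE_iff {A B : H →L[ℂ] H} : loewnerLE A B ↔ A ≤ B := Iff.rfl

namespace IsJointObs

variable {G : Fin 2 → Fin 2 → (H →L[ℂ] H)} {A B : Fin 2 → (H →L[ℂ] H)}

lemma nonneg (hG : IsJointObs G A B) (i j : Fin 2) : 0 ≤ G i j :=
  (ContinuousLinearMap.nonneg_iff_isPositive _).2 (hG.1 i j)

lemma le_left (hG : IsJointObs G A B) (i j : Fin 2) : G i j ≤ A i :=
  hG.2.2.1 i ▸ Finset.single_le_sum (fun l _ ↦ hG.nonneg i l) (Finset.mem_univ j)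

lemma le_right (hG : IsJointObs G A B) (i j : Fin 2) : G i j ≤ B j :=
  hG.2.2.2 j ▸ Finset.single_le_sum (fun k _ ↦ hG.nonneg k j) (Finset.mem_univ i)

lemma le_one (hG : IsJointObs G A B) (i j : Fin 2) : G i j ≤ 1 := by
  calc G i j ≤ A i := hG.le_left i j
    _ = ∑ l, G i l := (hG.2.2.1 i).symm
    _ ≤ ∑ k, ∑ l, G k l :=
      Finset.single_le_sum (f := fun k ↦ ∑ l, G k l)
        (fun k _ ↦ Finset.sum_nonneg fun l _ ↦ hG.nonneg k l) (Finset.mem_univ i)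
    _ = 1 := hG.2.1

lemma mem_lb (hG : IsJointObs G A B) (i j : Fin 2) :
    IsEffect (G i j) ∧ loewnerLE (G i j) (A i) ∧ loewnerLE (G i j) (B j) :=
  ⟨isEffect_iff.2 ⟨hG.nonneg i j, hG.le_one i j⟩, loewnerLE_iff.2 (hG.le_left i j),
    loewnerLE_iff.2 (hG.le_right i j)⟩

lemma add_checkerboard (hG : IsJointObs G A B) (i j : Fin 2) (E : H →L[ℂ] H)
    (hpos : ∀ k l, 0 ≤ G k l + checkerboard i j E k l) :
    IsJointObs (fun k l ↦ G k l + checkerboard i j E k l) A B := by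
  refine ⟨fun k l ↦ (ContinuousLinearMap.nonneg_iff_isPositive _).1 (hpos k l), ?_, ?_, ?_⟩
  · simp only [Finset.sum_add_distrib, sum_checkerboard_right, add_zero]
    exact hG.2.1
  · intro k
    rw [Finset.sum_add_distrib, sum_checkerboard_right, add_zero, hG.2.2.1 k]
  · intro l
    rw [Finset.sum_add_distrib, sum_checkerboard_left, add_zero, hG.2.2.2 l]

lemma eq_of_le_of_le_of_le (hG : IsJointObs G A B)
    (huniq : ∀ G', IsJointObs G' A B → G' = G) {i j : Fin 2} {D : H →L[ℂ] H}
    (hGD : G i j ≤ D) (hDA : D ≤ A i) (hDB : D ≤ B j) : G i j = D := by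
  have hpos := nonneg_add_checkerboard hG.nonneg hGD
    (hG.2.2.1 i ▸ hDA) (hG.2.2.2 j ▸ hDB)
  have hcell := congrFun₂ (huniq _ (hG.add_checkerboard i j (D - G i j) hpos)) i j
  simpa [checkerboard] using hcell.symm

end IsJointObs

theorem unique_joint_observable_is_maximal_general
    (A B : Fin 2 → (H →L[ℂ] H))
    (G : Fin 2 → Fin 2 → (H →L[ℂ] H)) (hG : IsJointObs G A B)
    (huniq : ∀ G' : Fin 2 → Fin 2 → (H →L[ℂ] H), IsJointObs G' A B → G' = G) :
    ∀ i j, IsMaximalLB (G i j) (A i) (B j) := by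
  intro i j
  refine ⟨hG.mem_lb i j, ?_⟩
  rintro ⟨D, ⟨-, hDA, hDB⟩, hGD, hne⟩
  rw [loewnerLE_iff] at hDA hDB hGD
  exact hne (hG.eq_of_le_of_le_of_le huniq hGD hDA hDB)

/-- if two-outcome observables `A` and `B` have exactly one joint observable
`G`, then `G` is a maximal joint observable. -/
theorem unique_joint_observable_is_maximal
    (A B : Fin 2 → (H →L[ℂ] H))
    (hA : ∀ i, IsEffect (A i)) (hAsum : A 0 + A 1 = 1)
    (hB : ∀ j, IsEffect (B j)) (hBsum : B 0 + B 1 = 1)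
    (G : Fin 2 → Fin 2 → (H →L[ℂ] H)) (hG : IsJointObs G A B)
    (huniq : ∀ G' : Fin 2 → Fin 2 → (H →L[ℂ] H), IsJointObs G' A B → G' = G) :
    ∀ i j, IsMaximalLB (G i j) (A i) (B j) :=
  unique_joint_observable_is_maximal_general A B G hG huniq
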